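/- Let A be a C*-subalgebra of B(H) containing the identity operator, and (p_ξ)_{ξ∈Ξ} an orthogonal family of projections belonging to A whose supremum is 1 in B(H). Suppose the projections p_ξ are pairwise equivalent in A and for every ξ the corner p_ξ A p_ξ is a von Neumann algebra (closed in the weak operator topology of B(H)). Then the infinite order decomposition S = {a ∈ B(H) : p_ξ a p_η ∈ A for all ξ, η ∈ Ξ} is a von Neumann algebra on H, i.e., a *-subalgebra of B(H) containing the identity that is closed in the weak operator topology. -/

import Mathlib

/-!
Right multiplication by a partial isometry `v ∈ A` with `v v* = p ξ`, `v* v = p η` identifies the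
block `p ξ A p η` with a part of the corner `p ξ A p ξ`. Membership in `S` thus becomes a family of
corner conditions, each of which is WOT-closed. For a product of `a, b ∈ S`, the finite sums
`p ξ a (∑_{ζ ∈ F} p ζ) b p η = ∑_{ζ ∈ F} (p ξ a p ζ) (p ζ b p η)` lie in `A`; since the partial sums
of the `p ζ` converge strongly to `1`, WOT-closedness of the corner puts `p ξ a b p η` in `A`.
-/

open Filter Topology

section Algebraic

variable {A ι : Type*}

theorem sum_mul_sum_of_subset_of_orthogonal [NonUnitalNonAssocSemiring A] {p : ι → A}
    (hp : ∀ i, IsIdempotentElem (p i)) (horth : Pairwise fun i j => p i * p j = 0)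
    {s t : Finset ι} (hst : s ⊆ t) : (∑ i ∈ t, p i) * ∑ i ∈ s, p i = ∑ i ∈ s, p i := by
  classical
  rw [Finset.sum_mul_sum, Finset.sum_comm]
  refine Finset.sum_congr rfl fun j hj => ?_
  rw [Finset.sum_eq_single_of_mem j (hst hj) fun i _ hij => horth hij, (hp j).eq]

theorem IsStarProjection.sum [NonUnitalSemiring A] [StarRing A] {p : ι → A}
    (hp : ∀ i, IsStarProjection (p i)) (horth : Pairwise fun i j => p i * p j = 0)
    (s : Finset ι) : IsStarProjection (∑ i ∈ s, p i) :=
  ⟨sum_mul_sum_of_subset_of_orthogonal (fun i => (hp i).isIdempotentElem) horth subset_rfl,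
    isSelfAdjoint_sum s fun i _ => (hp i).isSelfAdjoint⟩

section Corner

variable [Semiring A] {S : Type*} [SetLike S A] (B : S)

def corner (e : A) : Set A := {x | ∃ a ∈ B, x = e * a * e}

/-- The infinite order decomposition `∑⊕ p i B p j`. -/
def orderDecomposition (p : ι → A) : Set A := {a | ∀ i j, p i * a * p j ∈ B}

variable {B} [MulMemClass S A]

theorem mul_mul_mem_corner_iff {e : A} (he : e ∈ B) (he' : IsIdempotentElem e) (x : A) :
    e * x * e ∈ corner B e ↔ e * x * e ∈ B := by
  refine ⟨?_, fun h => ⟨e * x * e, h, ?_⟩⟩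
  · rintro ⟨a, ha, h⟩
    exact h ▸ mul_mem (mul_mem he ha) he
  · simp only [← mul_assoc, he'.eq, he'.mul_mul_self]

theorem mul_mul_mem_iff_mul_mul_star_mem [StarRing A] [StarMemClass S A] {v e f : A}
    (hv : v ∈ B) (hve : v * star v = e) (hvf : star v * v = f) (hf : IsIdempotentElem f)
    (a : A) : e * a * f ∈ B ↔ e * (a * star v) * e ∈ B := by
  have hshift : e * (a * star v) * e = e * a * f * star v := by
    rw [← hve, ← hvf]; simp only [mul_assoc]
  rw [hshift]
  refine ⟨fun h => mul_mem h (star_mem hv), fun h => ?_⟩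
  have hback : e * a * f = e * a * f * star v * v := by
    rw [mul_assoc _ (star v), hvf, mul_assoc (e * a), hf.eq]
  exact hback ▸ mul_mem h hv

theorem mem_orderDecomposition_iff_forall_mem_corner [StarRing A] [StarMemClass S A]
    {p : ι → A} {v : ι → ι → A} (hpB : ∀ i, p i ∈ B) (hp : ∀ i, IsIdempotentElem (p i))
    (hv : ∀ i j, v i j ∈ B) (hvi : ∀ i j, v i j * star (v i j) = p i)
    (hvj : ∀ i j, star (v i j) * v i j = p j) (a : A) :
    a ∈ orderDecomposition B p ↔ ∀ i j, p i * (a * star (v i j)) * p i ∈ corner B (p i) :=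
  forall₂_congr fun i j => by
    rw [mul_mul_mem_iff_mul_mul_star_mem (hv i j) (hvi i j) (hvj i j) (hp j),
      mul_mul_mem_corner_iff (hpB i) (hp i)]

end Corner

variable {R : Type*} [CommSemiring R] [StarRing R] [Semiring A] [StarRing A] [Algebra R A]
  [StarModule R A]

theorem exists_starSubalgebra_coe_eq_orderDecomposition (B : StarSubalgebra R A) {p : ι → A}
    (hpB : ∀ i, p i ∈ B) (hp : ∀ i, IsSelfAdjoint (p i))
    (hmul : ∀ a ∈ orderDecomposition B p, ∀ b ∈ orderDecomposition B p,
      a * b ∈ orderDecomposition B p) :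
    ∃ C : StarSubalgebra R A, (C : Set A) = orderDecomposition B p := by
  refine ⟨{ carrier := orderDecomposition B p
            mul_mem' := fun ha hb => hmul _ ha _ hb
            add_mem' := ?_
            algebraMap_mem' := ?_
            star_mem' := ?_ }, rfl⟩
  · intro a b ha hb i j
    rw [mul_add, add_mul]
    exact add_mem (ha i j) (hb i j)
  · intro r i j
    rw [← Algebra.commutes, mul_assoc]
    exact mul_mem (algebraMap_mem B r) (mul_mem (hpB i) (hpB j))
  · intro a ha i j
    simpa only [star_mul, (hp _).star_eq, mul_assoc] using star_mem (ha j i)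

end Algebraic

section Hilbert

variable {𝕜 E ι : Type*} [RCLike 𝕜] [NormedAddCommGroup E] [InnerProductSpace 𝕜 E]

theorem tendsto_sum_apply_of_topologicalClosure_iSup_range_eq_top [CompleteSpace E]
    {p : ι → E →L[𝕜] E} (hp : ∀ i, IsStarProjection (p i))
    (horth : Pairwise fun i j => p i * p j = 0)
    (hsup : (⨆ i, LinearMap.range (p i : E →ₗ[𝕜] E)).topologicalClosure = ⊤) (x : E) :
    Tendsto (fun s : Finset ι => (∑ i ∈ s, p i) x) atTop (𝓝 x) := by
  classical
  set U : Finset ι → Submodule 𝕜 E :=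
    fun s => LinearMap.range ((∑ i ∈ s, p i : E →L[𝕜] E) : E →ₗ[𝕜] E)
  choose hU hU_eq using fun s =>
    isStarProjection_iff_eq_starProjection_range.mp (IsStarProjection.sum hp horth s)
  have hmono : Monotone U := by
    rintro s t hst _ ⟨y, rfl⟩
    exact ⟨(∑ i ∈ s, p i) y,
      congr($(sum_mul_sum_of_subset_of_orthogonal (fun i => (hp i).isIdempotentElem) horth hst) y)⟩
  have hdense : ⊤ ≤ (⨆ s, U s).topologicalClosure := by
    rw [← hsup]
    refine Submodule.topologicalClosure_mono (iSup_le fun i => le_trans ?_ (le_iSup U {i}))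
    simp [U]
  convert Submodule.starProjection_tendsto_self U hmono x hdense using 2 with s
  exact congr($(hU_eq s) x)

end Hilbert

namespace ContinuousLinearMapWOT

variable {𝕜 E : Type*} [RCLike 𝕜] [NormedAddCommGroup E] [NormedSpace 𝕜 E]

theorem continuous_mul_mul (u w : E →WOT[𝕜] E) : Continuous fun x : E →WOT[𝕜] E => u * x * w :=
  (continuous_precomp w).comp (continuous_postcomp u)

theorem tendsto_ofCLM_of_tendsto_apply {α : Type*} {l : Filter α} {f : α → E →L[𝕜] E}
    {g : E →L[𝕜] E} (h : ∀ x, Tendsto (fun n => f n x) l (𝓝 (g x))) :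
    Tendsto (fun n => ofCLM (f n)) l (𝓝 (ofCLM g)) :=
  tendsto_iff_forall_dual_apply_tendsto.mpr fun x y => (y.continuous.tendsto _).comp (h x)

end ContinuousLinearMapWOT

open ContinuousLinearMapWOT

section VonNeumann

variable {𝕜 E ι : Type*} [RCLike 𝕜] [NormedAddCommGroup E] [InnerProductSpace 𝕜 E]
  [CompleteSpace E] {A : StarSubalgebra 𝕜 (E →L[𝕜] E)} {p : ι → E →L[𝕜] E}

theorem mul_mem_orderDecomposition (hpA : ∀ i, p i ∈ A)
    (hp : ∀ i, IsStarProjection (p i)) (horth : Pairwise fun i j => p i * p j = 0)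
    (hsup : (⨆ i, LinearMap.range (p i : E →ₗ[𝕜] E)).topologicalClosure = ⊤)
    (hequiv : ∀ i j, ∃ v ∈ A, v * star v = p i ∧ star v * v = p j)
    (hcorner : ∀ i, IsClosed (ofCLM '' corner A (p i))) {a b : E →L[𝕜] E}
    (ha : a ∈ orderDecomposition A p) (hb : b ∈ orderDecomposition A p) :
    a * b ∈ orderDecomposition A p := by
  choose v hvA hvi hvj using hequiv
  rw [mem_orderDecomposition_iff_forall_mem_corner hpA (fun i => (hp i).isIdempotentElem)
    hvA hvi hvj]
  intro i j
  have hvp : star (v i j) * p i = p j * star (v i j) := by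
    rw [← hvi, ← hvj, mul_assoc]
  have happrox (s : Finset ι) :
      p i * (a * (∑ k ∈ s, p k) * b * star (v i j)) * p i ∈ corner A (p i) := by
    rw [mul_mul_mem_corner_iff (hpA i) (hp i).isIdempotentElem]
    have hsum : p i * (a * (∑ k ∈ s, p k) * b * star (v i j)) * p i =
        ∑ k ∈ s, (p i * a * p k) * (p k * b * p j) * star (v i j) := by
      simp only [Finset.mul_sum, Finset.sum_mul]
      refine Finset.sum_congr rfl fun k _ => ?_
      simp only [mul_assoc, hvp, (hp k).isIdempotentElem.mul_self_mul]
    rw [hsum]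
    exact sum_mem fun k _ => mul_mem (mul_mem (ha i k) (hb k j)) (star_mem (hvA i j))
  have hlim : Tendsto
      (fun s : Finset ι => ofCLM (p i * (a * (∑ k ∈ s, p k) * b * star (v i j)) * p i)) atTop
      (𝓝 (ofCLM (p i * (a * b * star (v i j)) * p i))) :=
    tendsto_ofCLM_of_tendsto_apply fun x => ((p i * a).continuous.tendsto _).comp
      (tendsto_sum_apply_of_topologicalClosure_iSup_range_eq_top hp horth hsup _)
  exact ofCLM_injective.mem_set_image.mp ((hcorner i).mem_of_tendsto hlim
    (Eventually.of_forall fun s => Set.mem_image_of_mem _ (happrox s)))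

theorem isClosed_image_ofCLM_orderDecomposition (hpA : ∀ i, p i ∈ A)
    (hp : ∀ i, IsIdempotentElem (p i))
    (hequiv : ∀ i j, ∃ v ∈ A, v * star v = p i ∧ star v * v = p j)
    (hcorner : ∀ i, IsClosed (ofCLM '' corner A (p i))) :
    IsClosed (ofCLM '' orderDecomposition A p) := by
  choose v hvA hvi hvj using hequiv
  have himage : ofCLM '' orderDecomposition A p = ⋂ i, ⋂ j,
      (fun x => ofCLM (p i) * x * ofCLM (star (v i j) * p i)) ⁻¹' (ofCLM '' corner A (p i)) := by
    ext x
    obtain ⟨x, rfl⟩ := ofCLM_surjective x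
    simp only [ofCLM_injective.mem_set_image, Set.mem_iInter, Set.mem_preimage, ← ofCLM_mul,
      mem_orderDecomposition_iff_forall_mem_corner hpA hp hvA hvi hvj, mul_assoc]
  rw [himage]
  exact isClosed_iInter fun i => isClosed_iInter fun j =>
    (hcorner i).preimage (continuous_mul_mul _ _)

end VonNeumann

theorem stmt_10_general {H : Type*} [NormedAddCommGroup H] [InnerProductSpace ℂ H] [CompleteSpace H]
    {Ξ : Type*} (A : StarSubalgebra ℂ (H →L[ℂ] H))
    (p : Ξ → H →L[ℂ] H) (hpA : ∀ ξ, p ξ ∈ A)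
    (hproj : ∀ ξ, IsSelfAdjoint (p ξ) ∧ p ξ * p ξ = p ξ)
    (horth : ∀ ξ η, ξ ≠ η → p ξ * p η = 0)
    (hsup : (⨆ ξ, LinearMap.range (p ξ : H →ₗ[ℂ] H)).topologicalClosure = ⊤)
    (hequiv : ∀ ξ η, ∃ v ∈ A, v * star v = p ξ ∧ star v * v = p η)
    (hcorner : ∀ ξ, IsClosed ((ContinuousLinearMapWOT.ofCLM : (H →L[ℂ] H) → (H →WOT[ℂ] H)) ''
      {x : H →L[ℂ] H | ∃ a ∈ A, x = p ξ * a * p ξ}))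
    (S : Set (H →L[ℂ] H)) (hS : S = {a : H →L[ℂ] H | ∀ ξ η, p ξ * a * p η ∈ A}) :
    (∃ C : StarSubalgebra ℂ (H →L[ℂ] H), (C : Set (H →L[ℂ] H)) = S) ∧
    IsClosed ((ContinuousLinearMapWOT.ofCLM : (H →L[ℂ] H) → (H →WOT[ℂ] H)) '' S) := by
  subst hS
  have hp ξ : IsStarProjection (p ξ) := ⟨(hproj ξ).2, (hproj ξ).1⟩
  exact ⟨exists_starSubalgebra_coe_eq_orderDecomposition A hpA (fun ξ => (hproj ξ).1)
      fun _ ha _ hb => mul_mem_orderDecomposition hpA hp horth hsup hequiv hcorner ha hb,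
    isClosed_image_ofCLM_orderDecomposition hpA (fun ξ => (hp ξ).isIdempotentElem) hequiv hcorner⟩

/-- (Theorem 11 of the paper.) Let `A` be a (norm-closed) C*-subalgebra of
`B(H)` containing the identity and `(p ξ)` an orthogonal family of projections in `A` with
supremum `1` in `B(H)`, whose members are pairwise equivalent in `A` and such that each corner
`p ξ * A * p ξ` is a von Neumann algebra (closed in the weak operator topology). Then the
infinite order decomposition `S = {a : p ξ * a * p η ∈ A for all ξ, η}` is a von Neumann
algebra on `H`: it is the carrier of a unital *-subalgebra of `B(H)` which is closed in the
weak operator topology. -/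
theorem stmt_10 {H : Type*} [NormedAddCommGroup H] [InnerProductSpace ℂ H] [CompleteSpace H]
    {Ξ : Type*} (A : StarSubalgebra ℂ (H →L[ℂ] H)) (hA : IsClosed (A : Set (H →L[ℂ] H)))
    (p : Ξ → H →L[ℂ] H) (hpA : ∀ ξ, p ξ ∈ A)
    (hproj : ∀ ξ, IsSelfAdjoint (p ξ) ∧ p ξ * p ξ = p ξ)
    (horth : ∀ ξ η, ξ ≠ η → p ξ * p η = 0)
    (hsup : (⨆ ξ, LinearMap.range (p ξ : H →ₗ[ℂ] H)).topologicalClosure = ⊤)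
    (hequiv : ∀ ξ η, ∃ v ∈ A, v * star v = p ξ ∧ star v * v = p η)
    (hcorner : ∀ ξ, IsClosed ((ContinuousLinearMapWOT.ofCLM : (H →L[ℂ] H) → (H →WOT[ℂ] H)) ''
      {x : H →L[ℂ] H | ∃ a ∈ A, x = p ξ * a * p ξ}))
    (S : Set (H →L[ℂ] H)) (hS : S = {a : H →L[ℂ] H | ∀ ξ η, p ξ * a * p η ∈ A}) :
    (∃ C : StarSubalgebra ℂ (H →L[ℂ] H), (C : Set (H →L[ℂ] H)) = S) ∧
    IsClosed ((ContinuousLinearMapWOT.ofCLM : (H →L[ℂ] H) → (H →WOT[ℂ] H)) '' S) :=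
  stmt_10_general A p hpA hproj horth hsup hequiv hcorner S hS
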